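/- arXiv:2105.03916 — 2 statements merged into one kernel-verified Lean document; each statement's English description precedes it below -/
import Mathlib

section
/- For every g ∈ GSp₄(ℚ) and every Y ∈ V, the conjugate g·Y·g⁻¹ again lies in V and q(g·Y·g⁻¹) = q(Y). Consequently the map Φ sending g to the linear map Y ↦ g·Y·g⁻¹ is a group homomorphism from GSp₄(ℚ) into the orthogonal group of the quadratic space (V, q). -/
/-!
STATEMENT 0: For every g ∈ GSp₄(ℚ) and every Y ∈ V, the conjugate g·Y·g⁻¹ again lies in V
and q(g·Y·g⁻¹) = q(Y).  Consequently the map Φ sending g to the linear map Y ↦ g·Y·g⁻¹ is a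
group homomorphism from GSp₄(ℚ) into the orthogonal group of the quadratic space (V, q).
-/

open Matrix

noncomputable section

/-- The 4×4 matrix with 2×2 blocks `[[A, B], [C, D]]`. -/
def blk {R : Type*} (A B C D : Matrix (Fin 2) (Fin 2) R) : Matrix (Fin 4) (Fin 4) R :=
  !![A 0 0, A 0 1, B 0 0, B 0 1;
     A 1 0, A 1 1, B 1 0, B 1 1;
     C 0 0, C 0 1, D 0 0, D 0 1;
     C 1 0, C 1 1, D 1 0, D 1 1]

/-- `J₂ = [[0, I₂], [−I₂, 0]] ∈ M₄(ℚ)`. -/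
def J2 : Matrix (Fin 4) (Fin 4) ℚ := blk 0 1 (-1) 0

/-- Membership in `GSp₄(ℚ) = {g ∈ GL₄(ℚ) : gᵀ J₂ g = ν(g) J₂, ν(g) ∈ ℚˣ}`. -/
def IsGSp4 (g : Matrix (Fin 4) (Fin 4) ℚ) : Prop :=
  IsUnit g ∧ ∃ ν : ℚ, ν ≠ 0 ∧ gᵀ * J2 * g = ν • J2

/-- `w = [[0,1],[−1,0]] ∈ M₂(ℚ)`. -/
def wMat : Matrix (Fin 2) (Fin 2) ℚ := !![0, 1; -1, 0]

/-- Membership in the quadratic space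
`V = {[[X, x′·w],[−x″·w, Xᵀ]] : x′, x″ ∈ ℚ, X ∈ M₂(ℚ), Tr X = 0}`. -/
def memV (Y : Matrix (Fin 4) (Fin 4) ℚ) : Prop :=
  ∃ (X : Matrix (Fin 2) (Fin 2) ℚ) (x' x'' : ℚ),
    X.trace = 0 ∧ Y = blk X (x' • wMat) (-(x'' • wMat)) Xᵀ

/-- The quadratic form `q(Y) = (1/4)·Tr(Y²)`. -/
def qV (Y : Matrix (Fin 4) (Fin 4) ℚ) : ℚ := (1 / 4) * (Y * Y).trace

/-- `V` is exactly the set of traceless `Y` with `Yᵀ J₂ = J₂ Y`. -/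
lemma memV_iff (Y : Matrix (Fin 4) (Fin 4) ℚ) :
    memV Y ↔ Yᵀ * J2 = J2 * Y ∧ Y.trace = 0 := by
  constructor
  · rintro ⟨X, x', x'', hX, rfl⟩
    have hX' : X 0 0 + X 1 1 = 0 := by
      simpa [Matrix.trace, Fin.sum_univ_two] using hX
    constructor
    · ext i j
      fin_cases i <;> fin_cases j <;>
        simp [blk, J2, wMat, Matrix.mul_apply, Fin.sum_univ_four, Matrix.vecHead,
          Matrix.vecTail, Matrix.transpose_apply]
    · simp [blk, Matrix.trace, Fin.sum_univ_four]; linarith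
  · rintro ⟨h, htr⟩
    have key : ∀ i j : Fin 4, (Yᵀ * J2) i j = (J2 * Y) i j := fun i j => by rw [h]
    have htr' : Y 0 0 + Y 1 1 + Y 2 2 + Y 3 3 = 0 := by
      simpa [Matrix.trace, Fin.sum_univ_four] using htr
    have k1 := key 0 0; have k2 := key 0 1; have k3 := key 0 2; have k4 := key 0 3
    have k5 := key 1 0; have k6 := key 1 1; have k7 := key 1 2; have k8 := key 1 3
    have k9 := key 2 2; have k10 := key 2 3; have k11 := key 3 2; have k12 := key 3 3
    simp [Matrix.mul_apply, Fin.sum_univ_four, J2, blk, Matrix.vecHead, Matrix.vecTail,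
      Matrix.transpose_apply] at k1 k2 k3 k4 k5 k6 k7 k8 k9 k10 k11 k12
    refine ⟨!![Y 0 0, Y 0 1; Y 1 0, Y 1 1], Y 0 3, -(Y 2 1), ?_, ?_⟩
    · simp [Matrix.trace, Fin.sum_univ_two]
      linarith
    · ext i j
      fin_cases i <;> fin_cases j <;>
        · simp [blk, wMat, Matrix.vecHead, Matrix.vecTail, Matrix.transpose_apply]
          try linarith

/-- Conjugation by an element of `GSp₄` preserves `V`. -/
lemma conj_memV {g Y : Matrix (Fin 4) (Fin 4) ℚ} (hg : IsGSp4 g) (hY : memV Y) :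
    memV (g * Y * g⁻¹) := by
  obtain ⟨hu, ν, hν0, hν⟩ := hg
  have hdet : IsUnit g.det := (Matrix.isUnit_iff_isUnit_det g).mp hu
  have hgi : g * g⁻¹ = 1 := Matrix.mul_nonsing_inv g hdet
  have hig : g⁻¹ * g = 1 := Matrix.nonsing_inv_mul g hdet
  have hdetT : IsUnit gᵀ.det := by rwa [Matrix.det_transpose]
  have higT : (gᵀ)⁻¹ * gᵀ = 1 := Matrix.nonsing_inv_mul gᵀ hdetT
  obtain ⟨hYJ, hYtr⟩ := (memV_iff Y).mp hY
  rw [memV_iff]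
  constructor
  · have h1 : gᵀ * J2 = ν • (J2 * g⁻¹) := by
      calc gᵀ * J2 = (gᵀ * J2 * g) * g⁻¹ := by
            rw [Matrix.mul_assoc (gᵀ * J2) g g⁻¹, hgi, Matrix.mul_one]
        _ = (ν • J2) * g⁻¹ := by rw [hν]
        _ = ν • (J2 * g⁻¹) := by rw [Matrix.smul_mul]
    have h2 : J2 * g = ν • ((g⁻¹)ᵀ * J2) := by
      calc J2 * g = ((gᵀ)⁻¹ * gᵀ) * (J2 * g) := by rw [higT, Matrix.one_mul]
        _ = (gᵀ)⁻¹ * (gᵀ * J2 * g) := by simp only [Matrix.mul_assoc]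
        _ = (gᵀ)⁻¹ * (ν • J2) := by rw [hν]
        _ = ν • ((g⁻¹)ᵀ * J2) := by rw [Matrix.mul_smul, Matrix.transpose_nonsing_inv]
    calc (g * Y * g⁻¹)ᵀ * J2
        = (g⁻¹)ᵀ * (Yᵀ * (gᵀ * J2)) := by
          simp only [Matrix.transpose_mul, Matrix.mul_assoc]
      _ = (g⁻¹)ᵀ * (Yᵀ * (ν • (J2 * g⁻¹))) := by rw [h1]
      _ = ν • ((g⁻¹)ᵀ * (Yᵀ * J2 * g⁻¹)) := by
          simp only [Matrix.mul_smul, Matrix.mul_assoc]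
      _ = ν • ((g⁻¹)ᵀ * (J2 * Y * g⁻¹)) := by rw [hYJ]
      _ = (ν • ((g⁻¹)ᵀ * J2)) * (Y * g⁻¹) := by
          simp only [Matrix.smul_mul, Matrix.mul_assoc]
      _ = (J2 * g) * (Y * g⁻¹) := by rw [h2]
      _ = J2 * (g * Y * g⁻¹) := by simp only [Matrix.mul_assoc]
  · calc (g * Y * g⁻¹).trace = (g⁻¹ * (g * Y)).trace := by
          rw [Matrix.trace_mul_comm]
      _ = ((g⁻¹ * g) * Y).trace := by rw [Matrix.mul_assoc]
      _ = Y.trace := by rw [hig, Matrix.one_mul]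
      _ = 0 := hYtr

/-- Conjugation by an invertible matrix preserves `qV`. -/
lemma conj_qV {g Y : Matrix (Fin 4) (Fin 4) ℚ} (hu : IsUnit g) :
    qV (g * Y * g⁻¹) = qV Y := by
  have hdet : IsUnit g.det := (Matrix.isUnit_iff_isUnit_det g).mp hu
  have hig : g⁻¹ * g = 1 := Matrix.nonsing_inv_mul g hdet
  have hsq : (g * Y * g⁻¹) * (g * Y * g⁻¹) = g * (Y * Y) * g⁻¹ := by
    calc (g * Y * g⁻¹) * (g * Y * g⁻¹) = g * (Y * ((g⁻¹ * g) * (Y * g⁻¹))) := by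
          simp only [Matrix.mul_assoc]
      _ = g * (Y * Y) * g⁻¹ := by rw [hig, Matrix.one_mul]; simp only [Matrix.mul_assoc]
  unfold qV
  rw [hsq, Matrix.trace_mul_comm, ← Matrix.mul_assoc, hig, Matrix.one_mul]

/-- Conjugation by elements of `GSp₄(ℚ)` preserves `V` and the quadratic form `q`, and the
resulting map `Φ : g ↦ (Y ↦ g·Y·g⁻¹)` is a group homomorphism from `GSp₄(ℚ)` into the
orthogonal group of `(V, q)`: each `Φ g` is a `q`-preserving self-map of `V`,
`Φ` is multiplicative, and `Φ 1 = id`. -/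
theorem stmt0 :
    (∀ g : Matrix (Fin 4) (Fin 4) ℚ, IsGSp4 g → ∀ Y, memV Y →
      memV (g * Y * g⁻¹) ∧ qV (g * Y * g⁻¹) = qV Y) ∧
    (∀ g g' : Matrix (Fin 4) (Fin 4) ℚ, IsGSp4 g → IsGSp4 g' → ∀ Y, memV Y →
      (g * g') * Y * (g * g')⁻¹ = g * (g' * Y * g'⁻¹) * g⁻¹) ∧
    (∀ Y : Matrix (Fin 4) (Fin 4) ℚ, memV Y →
      (1 : Matrix (Fin 4) (Fin 4) ℚ) * Y * (1 : Matrix (Fin 4) (Fin 4) ℚ)⁻¹ = Y) := by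
  refine ⟨fun g hg Y hY => ⟨conj_memV hg hY, conj_qV hg.1⟩, fun g g' hg hg' Y hY => ?_, ?_⟩
  · rw [Matrix.mul_inv_rev]
    simp only [Matrix.mul_assoc]
  · intro Y hY
    simp

end
end

section
/- The homomorphism Φ : GSp₄(ℚ) → GL(V), Φ(g) : Y ↦ g·Y·g⁻¹, has the following properties: det Φ(g) = 1 for every g ∈ GSp₄(ℚ); every ℚ-linear map T : V → V with q∘T = q and det T = 1 equals Φ(g) for some g ∈ GSp₄(ℚ); and Φ(g) = Φ(g′) iff g′ = λg for some λ ∈ ℚˣ. Hence Φ induces a group isomorphism GSp₄(ℚ)/ℚˣ·I₄ ≅ SO(V, q)(ℚ) (the ℚ-points version of the exceptional isomorphism PGSp₄ ≅ SO(V)). -/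
/-! STATEMENT 2: properties of Φ : GSp₄(ℚ) → GL(V), Φ(g) : Y ↦ g·Y·g⁻¹. -/
open Matrix

noncomputable section

lemma blk_add {R : Type*} [AddCommMonoid R] (A B C D A' B' C' D' : Matrix (Fin 2) (Fin 2) R) :
    blk A B C D + blk A' B' C' D' = blk (A + A') (B + B') (C + C') (D + D') := by
  ext i j
  fin_cases i <;> fin_cases j <;> simp [blk, Matrix.vecHead, Matrix.vecTail]

lemma blk_smul (c : ℚ) (A B C D : Matrix (Fin 2) (Fin 2) ℚ) :
    c • blk A B C D = blk (c • A) (c • B) (c • C) (c • D) := by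
  ext i j
  fin_cases i <;> fin_cases j <;> simp [blk, Matrix.vecHead, Matrix.vecTail]

lemma blk_zero : blk (0 : Matrix (Fin 2) (Fin 2) ℚ) 0 0 0 = 0 := by
  ext i j
  fin_cases i <;> fin_cases j <;> simp [blk, Matrix.vecHead, Matrix.vecTail]

/-- `V`, as a ℚ-subspace of `M₄(ℚ)`. -/
def Vsub : Submodule ℚ (Matrix (Fin 4) (Fin 4) ℚ) where
  carrier := {Y | memV Y}
  zero_mem' := ⟨0, 0, 0, by simp, by simp [blk_zero.symm]⟩
  add_mem' := by
    rintro Y Z ⟨X1, a1, b1, h1, rfl⟩ ⟨X2, a2, b2, h2, rfl⟩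
    refine ⟨X1 + X2, a1 + a2, b1 + b2, by simp [h1, h2], ?_⟩
    rw [blk_add]; simp [add_smul, neg_add, Matrix.transpose_add, add_comm]
  smul_mem' := by
    rintro c Y ⟨X1, a1, b1, h1, rfl⟩
    refine ⟨c • X1, c * a1, c * b1, by simp [h1], ?_⟩
    rw [blk_smul]; simp [smul_smul, smul_neg, Matrix.transpose_smul]

/-!
For `Y ∈ V` one has `Y² = q(Y)·1` and `Yᵀ J₂ Y = q(Y)·J₂`, so an anisotropic `u ∈ V` lies in
`GSp₄(ℚ)` and the reflection of `V` in `u` is `Y ↦ -u Y u⁻¹`. Since `V` has an orthogonal basis of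
anisotropic vectors, Cartan–Dieudonné writes every isometry `T` of `V` as a product of reflections,
hence `T Y = det T • g Y g⁻¹` for some `g ∈ GSp₄(ℚ)`. Finally, the matrices `h` with `h Y = ±Y h`
for all `Y ∈ V` are the scalars (sign `+`) and `0` (sign `-`); this forces `det Φ(g) = 1` and
identifies the kernel of `Φ`.
-/

lemma Module.det_preReflection {R M : Type*} [CommRing R] [AddCommGroup M] [Module R M]
    [Module.Free R M] [Module.Finite R M] (x : M) (f : Module.Dual R M) :
    LinearMap.det (Module.preReflection x f) = 1 - f x := by
  let b := Module.Free.chooseBasis R M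
  rw [← LinearMap.det_toMatrix b, Module.preReflection, map_sub, LinearMap.toMatrix_id,
    LinearMap.toMatrix_smulRight, sub_eq_add_neg, ← Matrix.neg_vecMulVec, Matrix.vecMulVec_eq Unit,
    Matrix.det_one_add_replicateCol_mul_replicateRow, dotProduct_neg, ← sub_eq_add_neg]
  congr 1
  conv_rhs => rw [← b.sum_repr x, map_sum]
  simp [dotProduct, mul_comm]

namespace QuadraticMap

variable {K M : Type*} [Field K] [AddCommGroup M] [Module K M] {Q : QuadraticForm K M}

lemma inv_mul_polar_self {u : M} (hu : Q u ≠ 0) : (Q u)⁻¹ * polar Q u u = 2 := by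
  rw [polar_self, nsmul_eq_mul, Nat.cast_ofNat]
  field_simp

variable (Q) in
def reflection (u : M) (hu : Q u ≠ 0) : M ≃ₗ[K] M :=
  Module.reflection (x := u) (f := (Q u)⁻¹ • polarBilin Q u) <| by
    rw [LinearMap.smul_apply, polarBilin_apply_apply, smul_eq_mul, inv_mul_polar_self hu]

lemma reflection_apply {u : M} (hu : Q u ≠ 0) (y : M) :
    Q.reflection u hu y = y - ((Q u)⁻¹ * polar Q u y) • u := by
  simp [reflection, Module.reflection_apply]

lemma map_reflection {u : M} (hu : Q u ≠ 0) (y : M) : Q (Q.reflection u hu y) = Q y := by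
  rw [reflection_apply, sub_eq_add_neg, ← neg_smul, QuadraticMap.map_add (⇑Q),
    QuadraticMap.map_smul, polar_smul_right, polar_comm]
  linear_combination (polar Q y u ^ 2 * (Q u)⁻¹) * mul_inv_cancel₀ hu

lemma reflection_apply_of_polar_eq_zero {u y : M} (hu : Q u ≠ 0) (hy : polar Q u y = 0) :
    Q.reflection u hu y = y := by
  simp [reflection_apply, hy]

lemma det_reflection [FiniteDimensional K M] {u : M} (hu : Q u ≠ 0) :
    LinearMap.det (Q.reflection u hu : M →ₗ[K] M) = -1 := by
  rw [show (Q.reflection u hu : M →ₗ[K] M) = Module.preReflection u ((Q u)⁻¹ • polarBilin Q u)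
    from rfl, Module.det_preReflection, LinearMap.smul_apply, polarBilin_apply_apply, smul_eq_mul,
    inv_mul_polar_self hu]
  norm_num

lemma map_sub_eq_add_sub_polar (x y : M) : Q (x - y) = Q x + Q y - polar Q x y := by
  rw [sub_eq_add_neg, QuadraticMap.map_add (⇑Q), QuadraticMap.map_neg, polar_neg_right,
    sub_eq_add_neg]

lemma polar_map_of_isometry {T : M →ₗ[K] M} (hT : ∀ y, Q (T y) = Q y) (x y : M) :
    polar Q (T x) (T y) = polar Q x y := by
  simp only [polar, ← map_add, hT]

variable (Q) in
def reflectionGroup : Subgroup (M ≃ₗ[K] M) :=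
  Subgroup.closure {R | ∃ u, ∃ hu : Q u ≠ 0, Q.reflection u hu = R}

lemma reflection_mem_reflectionGroup {u : M} (hu : Q u ≠ 0) :
    Q.reflection u hu ∈ Q.reflectionGroup :=
  Subgroup.subset_closure ⟨u, hu, rfl⟩

lemma map_apply_of_mem_reflectionGroup {R : M ≃ₗ[K] M} (hR : R ∈ Q.reflectionGroup) (y : M) :
    Q (R y) = Q y := by
  induction hR using Subgroup.closure_induction generalizing y with
  | mem R hR =>
    obtain ⟨u, hu, rfl⟩ := hR
    exact map_reflection hu y
  | one => rfl
  | mul R S _ _ hR hS => rw [LinearEquiv.mul_apply, hR, hS]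
  | inv R _ hR => rw [← hR, ← LinearEquiv.mul_apply, mul_inv_cancel]; rfl

/-- One reflection (in `y - x`) suffices unless `y - x` is isotropic; then `y + x` is not, and
`x ↦ -y ↦ y` under the reflections in `y + x` and `y`. -/
lemma exists_mem_reflectionGroup_apply_eq [NeZero (2 : K)] {x y : M} (hxy : Q x = Q y)
    (hy : Q y ≠ 0) :
    ∃ R ∈ Q.reflectionGroup, R x = y ∧ ∀ z, polar Q x z = 0 → polar Q y z = 0 → R z = z := by
  have hx2 : polar Q x x = 2 * Q y := by simp [polar_self, hxy]
  by_cases hsub : Q (y - x) = 0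
  · have hadd : Q (y + x) ≠ 0 := by
      rw [map_sub_eq_add_sub_polar] at hsub
      rw [QuadraticMap.map_add (⇑Q)]
      intro h
      have : (2 * 2 : K) * Q y = 0 := by linear_combination h + hsub - 2 * hxy
      exact hy ((mul_eq_zero.1 this).resolve_left (mul_ne_zero two_ne_zero two_ne_zero))
    refine ⟨Q.reflection y hy * Q.reflection (y + x) hadd,
      mul_mem (reflection_mem_reflectionGroup hy) (reflection_mem_reflectionGroup hadd), ?_, ?_⟩
    · have hcoef : (Q (y + x))⁻¹ * polar Q (y + x) x = 1 := by
        have : polar Q (y + x) x = Q (y + x) := by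
          rw [QuadraticMap.map_add (⇑Q), polar_add_left, hx2, hxy]
          ring
        rw [this, inv_mul_cancel₀ hadd]
      have hy2 : (Q y)⁻¹ * polar Q y (-y) = -2 := by
        rw [polar_neg_right, mul_neg, inv_mul_polar_self hy]
      rw [LinearEquiv.mul_apply, reflection_apply hadd, hcoef, one_smul,
        show x - (y + x) = -y by abel, reflection_apply hy, hy2]
      module
    · intro z hxz hyz
      rw [LinearEquiv.mul_apply,
        reflection_apply_of_polar_eq_zero hadd (by rw [polar_add_left, hxz, hyz, add_zero]),
        reflection_apply_of_polar_eq_zero hy hyz]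
  · refine ⟨Q.reflection (y - x) hsub, reflection_mem_reflectionGroup hsub, ?_, ?_⟩
    · have hcoef : (Q (y - x))⁻¹ * polar Q (y - x) x = -1 := by
        have : polar Q (y - x) x = -Q (y - x) := by
          rw [map_sub_eq_add_sub_polar, polar_sub_left, hx2, hxy]
          ring
        rw [this, mul_neg, inv_mul_cancel₀ hsub]
      rw [reflection_apply, hcoef]
      module
    · intro z hxz hyz
      exact reflection_apply_of_polar_eq_zero hsub (by rw [polar_sub_left, hxz, hyz, sub_zero])

/-- Cartan–Dieudonné. The `e i` are fixed one at a time by `exists_mem_reflectionGroup_apply_eq`,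
which does not move those fixed before: they are orthogonal to both vectors involved. -/
theorem exists_mem_reflectionGroup_eq_of_isometry [NeZero (2 : K)] {ι : Type*} [Fintype ι]
    {e : ι → M} (he : Submodule.span K (Set.range e) = ⊤)
    (he_ortho : Pairwise fun i j => polar Q (e i) (e j) = 0) (he_aniso : ∀ i, Q (e i) ≠ 0)
    {T : M →ₗ[K] M} (hT : ∀ y, Q (T y) = Q y) :
    ∃ R ∈ Q.reflectionGroup, (R : M →ₗ[K] M) = T := by
  classical
  have key : ∀ s : Finset ι, ∃ R ∈ Q.reflectionGroup, ∀ i ∈ s, R (T (e i)) = e i := by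
    intro s
    induction s using Finset.induction_on with
    | empty => exact ⟨1, one_mem _, by simp⟩
    | insert k s hk ih =>
      obtain ⟨R, hR, hRs⟩ := ih
      have hRT : ∀ y, Q (R (T y)) = Q y := fun y => by
        rw [map_apply_of_mem_reflectionGroup hR, hT]
      obtain ⟨R', hR', hR'k, hR'fix⟩ :=
        exists_mem_reflectionGroup_apply_eq (hRT (e k)) (he_aniso k)
      refine ⟨R' * R, mul_mem hR' hR, fun i hi => ?_⟩
      rcases Finset.mem_insert.1 hi with rfl | hi
      · exact hR'k
      · have hik : k ≠ i := fun h => hk (h ▸ hi)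
        rw [LinearEquiv.mul_apply, hRs i hi]
        apply hR'fix _ _ (he_ortho hik)
        have hpolar := polar_map_of_isometry (T := (R : M →ₗ[K] M) ∘ₗ T) hRT (e k) (e i)
        simp only [LinearMap.comp_apply, LinearEquiv.coe_coe, hRs i hi] at hpolar
        rw [hpolar, he_ortho hik]
  obtain ⟨R, hR, hRT⟩ := key Finset.univ
  refine ⟨R⁻¹, inv_mem hR, ?_⟩
  have hid : (R : M →ₗ[K] M) ∘ₗ T = LinearMap.id :=
    LinearMap.ext_on_range he fun i => hRT i (Finset.mem_univ i)
  ext y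
  have hy : R (T y) = y := LinearMap.congr_fun hid y
  conv_lhs => rw [← hy]
  simp

end QuadraticMap

lemma Matrix.conj_eq_smul_conj_iff {n K : Type*} [Fintype n] [DecidableEq n] [CommRing K]
    {g g' : Matrix n n K} (hg : IsUnit g) (hg' : IsUnit g') (d : K) (Y : Matrix n n K) :
    g * Y * g⁻¹ = d • (g' * Y * g'⁻¹) ↔ g'⁻¹ * g * Y = d • (Y * (g'⁻¹ * g)) := by
  rw [isUnit_iff_isUnit_det] at hg hg'
  constructor <;> intro h
  · calc g'⁻¹ * g * Y = g'⁻¹ * (g * Y * g⁻¹) * g := by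
          simp only [Matrix.mul_assoc, nonsing_inv_mul _ hg, Matrix.mul_one]
      _ = d • (Y * (g'⁻¹ * g)) := by
          rw [h, Matrix.mul_smul, Matrix.smul_mul]
          simp only [← Matrix.mul_assoc, nonsing_inv_mul _ hg', Matrix.one_mul]
  · calc g * Y * g⁻¹ = g' * (g'⁻¹ * g * Y) * g⁻¹ := by
          simp only [← Matrix.mul_assoc, mul_nonsing_inv _ hg', Matrix.one_mul]
      _ = d • (g' * Y * g'⁻¹) := by
          rw [h, Matrix.mul_smul, Matrix.smul_mul]
          simp only [Matrix.mul_assoc, mul_nonsing_inv _ hg, Matrix.mul_one]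

lemma Matrix.smul_mul_mul_inv_smul {n K : Type*} [Fintype n] [DecidableEq n] [Field K] {lam : K}
    (hlam : lam ≠ 0) {g : Matrix n n K} (hg : IsUnit g) (Y : Matrix n n K) :
    lam • g * Y * (lam • g)⁻¹ = g * Y * g⁻¹ := by
  have := Matrix.inv_smul' g (Units.mk0 lam hlam) ((Matrix.isUnit_iff_isUnit_det g).1 hg)
  simp only [Units.smul_def, Units.val_mk0, Units.val_inv_eq_inv_val] at this
  simp only [this, Matrix.smul_mul, Matrix.mul_smul, smul_smul, inv_mul_cancel₀ hlam, one_smul]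

local notation "M₄" => Matrix (Fin 4) (Fin 4) ℚ

/-- `X = [[a, b], [c, -a]]`, `x′ = s`, `x″ = t`. -/
def mkV (a b c s t : ℚ) : M₄ :=
  !![a, b, 0, s; c, -a, -s, 0; 0, -t, a, c; t, 0, b, -a]

lemma memV_mkV (a b c s t : ℚ) : memV (mkV a b c s t) := by
  refine ⟨!![a, b; c, -a], s, t, by simp [Matrix.trace_fin_two], ?_⟩
  ext i j
  fin_cases i <;> fin_cases j <;> simp [mkV, blk, wMat]

lemma memV_iff_s2 {Y : M₄} : memV Y ↔ ∃ a b c s t, Y = mkV a b c s t := by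
  refine ⟨?_, fun ⟨a, b, c, s, t, hY⟩ => hY ▸ memV_mkV a b c s t⟩
  rintro ⟨X, s, t, hX, rfl⟩
  have hX11 : X 1 1 = -X 0 0 := by
    rw [Matrix.trace_fin_two] at hX
    linarith
  refine ⟨X 0 0, X 0 1, X 1 0, s, t, ?_⟩
  ext i j
  fin_cases i <;> fin_cases j <;> simp [blk, mkV, wMat, hX11]

lemma mkV_add (a b c s t a' b' c' s' t' : ℚ) :
    mkV a b c s t + mkV a' b' c' s' t' = mkV (a + a') (b + b') (c + c') (s + s') (t + t') := by
  ext i j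
  fin_cases i <;> fin_cases j <;> simp [mkV] <;> ring

lemma mkV_mul_self (a b c s t : ℚ) :
    mkV a b c s t * mkV a b c s t = (a ^ 2 + b * c + s * t) • (1 : M₄) := by
  ext i j
  fin_cases i <;> fin_cases j <;> simp [mkV, Matrix.mul_apply, Fin.sum_univ_four] <;> ring

lemma transpose_mkV_mul_J2_mul_mkV (a b c s t : ℚ) :
    (mkV a b c s t)ᵀ * J2 * mkV a b c s t = (a ^ 2 + b * c + s * t) • J2 := by
  ext i j
  fin_cases i <;> fin_cases j <;>
    simp [mkV, J2, blk, Matrix.mul_apply, Fin.sum_univ_four] <;> ring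

lemma qV_of_mul_self_eq_smul_one {Y : M₄} {c : ℚ}
    (hY : Y * Y = c • (1 : M₄)) : qV Y = c := by
  rw [qV, hY, Matrix.trace_smul, Matrix.trace_one, Fintype.card_fin, smul_eq_mul]
  ring

lemma qV_mkV (a b c s t : ℚ) : qV (mkV a b c s t) = a ^ 2 + b * c + s * t :=
  qV_of_mul_self_eq_smul_one (mkV_mul_self a b c s t)

lemma mul_self_eq_qV_smul_one {Y : M₄} (hY : memV Y) :
    Y * Y = qV Y • (1 : M₄) := by
  obtain ⟨a, b, c, s, t, rfl⟩ := memV_iff_s2.1 hY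
  rw [mkV_mul_self, qV_mkV]

lemma transpose_mul_J2_mul_self {Y : M₄} (hY : memV Y) :
    Yᵀ * J2 * Y = qV Y • J2 := by
  obtain ⟨a, b, c, s, t, rfl⟩ := memV_iff_s2.1 hY
  rw [transpose_mkV_mul_J2_mul_mkV, qV_mkV]

lemma mul_qV_inv_smul_self {Y : M₄} (hY : memV Y) (hq : qV Y ≠ 0) : Y * ((qV Y)⁻¹ • Y) = 1 := by
  rw [Matrix.mul_smul, mul_self_eq_qV_smul_one hY, smul_smul, inv_mul_cancel₀ hq, one_smul]

lemma inv_eq_qV_inv_smul {Y : M₄} (hY : memV Y) (hq : qV Y ≠ 0) : Y⁻¹ = (qV Y)⁻¹ • Y :=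
  Matrix.inv_eq_right_inv (mul_qV_inv_smul_self hY hq)

lemma isGSp4_of_memV {Y : M₄} (hY : memV Y) (hq : qV Y ≠ 0) : IsGSp4 Y :=
  ⟨(Matrix.isUnit_iff_isUnit_det Y).2
    (Matrix.isUnit_det_of_right_inverse (mul_qV_inv_smul_self hY hq)),
    qV Y, hq, transpose_mul_J2_mul_self hY⟩

lemma isGSp4_one : IsGSp4 1 := ⟨isUnit_one, 1, one_ne_zero, by simp⟩

lemma IsGSp4.mul {g h : M₄} (hg : IsGSp4 g) (hh : IsGSp4 h) :
    IsGSp4 (g * h) := by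
  obtain ⟨hgu, ν, hν, hgJ⟩ := hg
  obtain ⟨hhu, μ, hμ, hhJ⟩ := hh
  refine ⟨hgu.mul hhu, ν * μ, mul_ne_zero hν hμ, ?_⟩
  calc (g * h)ᵀ * J2 * (g * h) = hᵀ * (gᵀ * J2 * g) * h := by
        simp only [Matrix.transpose_mul, Matrix.mul_assoc]
    _ = (ν * μ) • J2 := by
        rw [hgJ, Matrix.mul_smul, Matrix.smul_mul, hhJ, smul_smul]

lemma qV_conj {g : M₄} (hg : IsUnit g) (Y : M₄) :
    qV (g * Y * g⁻¹) = qV Y := by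
  have hdet := (Matrix.isUnit_iff_isUnit_det g).1 hg
  rw [qV, qV, ← Matrix.trace_conj hg (Y * Y)]
  simp only [Matrix.mul_assoc, Matrix.nonsing_inv_mul_cancel_left _ _ hdet]

def qForm : QuadraticForm ℚ Vsub :=
  LinearMap.BilinMap.toQuadraticMap
    (((1 / 4 : ℚ) • (LinearMap.mul ℚ M₄).compr₂
      (Matrix.traceLinearMap (Fin 4) ℚ ℚ)).compl₁₂ Vsub.subtype Vsub.subtype)

@[simp] lemma qForm_apply (Y : Vsub) : qForm Y = qV Y := rfl

lemma mul_add_mul_eq_polar_smul_one (Y Z : Vsub) :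
    (Y : M₄) * Z + Z * Y = QuadraticMap.polar qForm Y Z • 1 := by
  have hsum := mul_self_eq_qV_smul_one (Y + Z).2
  rw [Submodule.coe_add, add_mul, mul_add, mul_add, mul_self_eq_qV_smul_one Y.2,
    mul_self_eq_qV_smul_one Z.2] at hsum
  simp only [QuadraticMap.polar, qForm_apply, Submodule.coe_add, sub_smul]
  rw [← hsum]
  abel

/-- By the Clifford relations `u Y + Y u = B(u, Y)·1` and `u² = q(u)·1`. -/
lemma reflection_qForm_apply {u : Vsub} (hu : qForm u ≠ 0) (Y : Vsub) :
    (qForm.reflection u hu Y : M₄) = -((u : M₄) * Y * (u : M₄)⁻¹) := by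
  rw [qForm_apply] at hu
  have huYu : (u : M₄) * Y * u = QuadraticMap.polar qForm u Y • (u : M₄) - qV u • (Y : M₄) := by
    rw [← sub_eq_of_eq_add (mul_add_mul_eq_polar_smul_one u Y).symm, Matrix.sub_mul,
      Matrix.mul_assoc, mul_self_eq_qV_smul_one u.2, Matrix.smul_mul, Matrix.one_mul,
      Matrix.mul_smul, Matrix.mul_one]
  rw [QuadraticMap.reflection_apply, inv_eq_qV_inv_smul u.2 hu, Matrix.mul_smul, huYu, qForm_apply]
  push_cast
  rw [smul_sub, smul_smul, smul_smul, inv_mul_cancel₀ hu, one_smul]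
  abel

lemma exists_isGSp4_apply_eq_det_smul_conj {R : Vsub ≃ₗ[ℚ] Vsub}
    (hR : R ∈ qForm.reflectionGroup) :
    ∃ g, IsGSp4 g ∧ ∀ Y : Vsub,
      (R Y : M₄) = (LinearEquiv.det R : ℚ) • (g * Y * g⁻¹) := by
  have hrefl (u : Vsub) (hu : qForm u ≠ 0) : ∃ g, IsGSp4 g ∧ ∀ Y : Vsub,
      (qForm.reflection u hu Y : M₄) =
        (LinearEquiv.det (qForm.reflection u hu) : ℚ) • (g * Y * g⁻¹) :=
    ⟨u, isGSp4_of_memV u.2 hu, fun Y => by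
      rw [reflection_qForm_apply, LinearEquiv.coe_det, QuadraticMap.det_reflection, neg_one_smul]⟩
  induction hR using Subgroup.closure_induction'' with
  | mem R hR =>
    obtain ⟨u, hu, rfl⟩ := hR
    exact hrefl u hu
  | inv_mem R hR =>
    obtain ⟨u, hu, rfl⟩ := hR
    exact hrefl u hu
  | one => exact ⟨1, isGSp4_one, fun Y => by simp⟩
  | mul R S _ _ hR hS =>
    obtain ⟨g, hg, hRg⟩ := hR
    obtain ⟨h, hh, hSh⟩ := hS
    refine ⟨g * h, hg.mul hh, fun Y => ?_⟩
    rw [LinearEquiv.mul_apply, hRg, hSh, map_mul, Units.val_mul, Matrix.mul_inv_rev]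
    simp only [Matrix.mul_smul, Matrix.smul_mul, smul_smul, Matrix.mul_assoc]

lemma polar_qForm_mkV (a b c s t a' b' c' s' t' : ℚ) :
    QuadraticMap.polar qForm ⟨mkV a b c s t, memV_mkV ..⟩ ⟨mkV a' b' c' s' t', memV_mkV ..⟩
      = 2 * a * a' + b * c' + c * b' + s * t' + t * s' := by
  simp only [QuadraticMap.polar, qForm_apply, Submodule.coe_add, mkV_add, qV_mkV]
  ring

def orthoBasisV : Fin 5 → Vsub :=
  ![⟨mkV 1 0 0 0 0, memV_mkV ..⟩, ⟨mkV 0 1 1 0 0, memV_mkV ..⟩, ⟨mkV 0 1 (-1) 0 0, memV_mkV ..⟩,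
    ⟨mkV 0 0 0 1 1, memV_mkV ..⟩, ⟨mkV 0 0 0 1 (-1), memV_mkV ..⟩]

lemma span_orthoBasisV : Submodule.span ℚ (Set.range orthoBasisV) = ⊤ := by
  refine eq_top_iff.2 fun Y _ => (Submodule.mem_span_range_iff_exists_fun ℚ).2 ?_
  obtain ⟨a, b, c, s, t, hY⟩ := memV_iff_s2.1 Y.2
  refine ⟨![a, (b + c) / 2, (b - c) / 2, (s + t) / 2, (s - t) / 2], Subtype.ext ?_⟩
  simp only [Fin.sum_univ_five, orthoBasisV, hY, Submodule.coe_add, Submodule.coe_smul]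
  ext i j
  fin_cases i <;> fin_cases j <;> simp [mkV] <;> ring

lemma polar_orthoBasisV :
    Pairwise fun i j => QuadraticMap.polar qForm (orthoBasisV i) (orthoBasisV j) = 0 := by
  intro i j hij
  fin_cases i <;> fin_cases j <;> simp_all [orthoBasisV, polar_qForm_mkV]

lemma qForm_orthoBasisV_ne_zero (i : Fin 5) : qForm (orthoBasisV i) ≠ 0 := by
  fin_cases i <;> simp [orthoBasisV, qV_mkV]

lemma exists_isGSp4_apply_eq_det_smul_conj_of_isometry {T : Vsub →ₗ[ℚ] Vsub}
    (hT : ∀ Y : Vsub, qV (T Y : M₄) = qV Y) :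
    ∃ g, IsGSp4 g ∧ ∀ Y : Vsub, (T Y : M₄) = LinearMap.det T • (g * Y * g⁻¹) := by
  obtain ⟨R, hR, rfl⟩ := qForm.exists_mem_reflectionGroup_eq_of_isometry span_orthoBasisV
    polar_orthoBasisV qForm_orthoBasisV_ne_zero hT
  simpa only [LinearEquiv.coe_det, LinearEquiv.coe_coe] using
    exists_isGSp4_apply_eq_det_smul_conj hR

lemma eq_smul_one_of_commute_memV {h : M₄}
    (hc : ∀ Y, memV Y → h * Y = Y * h) : h = h 0 0 • 1 := by
  have e := fun a b c s t => Matrix.ext_iff.2 (hc (mkV a b c s t) (memV_mkV a b c s t))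
  have E1 := e 1 0 0 0 0
  have E2 := e 0 1 0 0 0
  have E3 := e 0 0 1 0 0
  have E4 := e 0 0 0 1 0
  simp [mkV, Matrix.mul_apply, Fin.sum_univ_four, Fin.forall_fin_succ] at E1 E2 E3 E4
  ext i j
  fin_cases i <;> fin_cases j <;> simp <;> linarith

lemma eq_zero_of_anticommute_memV {h : M₄}
    (hc : ∀ Y, memV Y → h * Y = -(Y * h)) : h = 0 := by
  have e := fun a b c s t => Matrix.ext_iff.2 (hc (mkV a b c s t) (memV_mkV a b c s t))
  have E1 := e 1 0 0 0 0
  have E2 := e 0 1 0 0 0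
  have E3 := e 0 0 1 0 0
  have E4 := e 0 0 0 1 0
  have E5 := e 0 0 0 0 1
  simp [mkV, Matrix.mul_apply, Matrix.vecMul, dotProduct, Fin.sum_univ_four, Fin.forall_fin_succ]
    at E1 E2 E3 E4 E5
  ext i j
  fin_cases i <;> fin_cases j <;> simp <;> linarith

lemma eq_one_of_mul_eq_smul_mul_memV {h : M₄} (hh : IsUnit h) {d : ℚ}
    (hd : ∀ Y, memV Y → h * Y = d • (Y * h)) : d = 1 := by
  set e := mkV 1 0 0 0 0
  have he : e * e = 1 := by simp [e, mkV_mul_self]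
  have hde := hd e (memV_mkV 1 0 0 0 0)
  have hh2 : h = (d * d) • h := calc
    h = h * e * e := by rw [Matrix.mul_assoc, he, Matrix.mul_one]
    _ = d • (e * h * e) := by rw [hde, Matrix.smul_mul]
    _ = d • (e * (d • (e * h))) := by rw [Matrix.mul_assoc, hde]
    _ = (d * d) • h := by rw [Matrix.mul_smul, ← Matrix.mul_assoc, he, Matrix.one_mul, smul_smul]
  have hsq : (d ^ 2 - 1) • h = 0 := by rw [sub_smul, one_smul, sq, ← hh2, sub_self]
  have hd2 : (d - 1) * (d + 1) = 0 := by
    linear_combination (smul_eq_zero.1 hsq).resolve_right hh.ne_zero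
  rcases mul_eq_zero.1 hd2 with hd1 | hd1
  · linarith
  · refine absurd (eq_zero_of_anticommute_memV fun Y hY => ?_) hh.ne_zero
    rw [hd Y hY, show d = -1 by linarith, neg_one_smul]

lemma eq_one_and_eq_smul_of_conj_eq_smul_conj {g g' : M₄} (hg : IsUnit g) (hg' : IsUnit g')
    {d : ℚ} (h : ∀ Y, memV Y → g * Y * g⁻¹ = d • (g' * Y * g'⁻¹)) :
    d = 1 ∧ ∃ lam : ℚ, lam ≠ 0 ∧ g' = lam • g := by
  have hu : IsUnit (g'⁻¹ * g) := (Matrix.isUnit_nonsing_inv_iff.2 hg').mul hg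
  have hd (Y : M₄) (hY : memV Y) : g'⁻¹ * g * Y = d • (Y * (g'⁻¹ * g)) :=
    (Matrix.conj_eq_smul_conj_iff hg hg' d Y).1 (h Y hY)
  obtain rfl := eq_one_of_mul_eq_smul_mul_memV hu hd
  have hc := eq_smul_one_of_commute_memV fun Y hY => by simpa using hd Y hY
  set c := (g'⁻¹ * g) 0 0
  have hc0 : c ≠ 0 := by
    rintro h0
    rw [h0, zero_smul] at hc
    exact hu.ne_zero hc
  refine ⟨rfl, c⁻¹, inv_ne_zero hc0, ?_⟩
  have hgc : g = c • g' := by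
    calc g = g' * (g'⁻¹ * g) := by
          rw [← Matrix.mul_assoc, Matrix.mul_nonsing_inv _ ((Matrix.isUnit_iff_isUnit_det _).1 hg'),
            Matrix.one_mul]
      _ = c • g' := by rw [hc, Matrix.mul_smul, Matrix.mul_one]
  rw [hgc, smul_smul, inv_mul_cancel₀ hc0, one_smul]

/-- det Φ(g) = 1 for all g ∈ GSp₄(ℚ); every ℚ-linear T : V → V with q∘T = q and det T = 1
equals Φ(g) for some g ∈ GSp₄(ℚ); and Φ(g) = Φ(g′) iff g′ = λ·g for some λ ∈ ℚˣ.
Hence Φ induces a group isomorphism GSp₄(ℚ)/ℚˣ·I₄ ≅ SO(V, q)(ℚ). -/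
theorem stmt2 :
    -- det Φ(g) = 1 : any linear self-map of V realizing Y ↦ g·Y·g⁻¹ has determinant 1
    (∀ g : Matrix (Fin 4) (Fin 4) ℚ, IsGSp4 g → ∀ T : ↥Vsub →ₗ[ℚ] ↥Vsub,
      (∀ Y : ↥Vsub, (T Y : Matrix (Fin 4) (Fin 4) ℚ) = g * (Y : Matrix (Fin 4) (Fin 4) ℚ) * g⁻¹) →
      LinearMap.det T = 1) ∧
    -- surjectivity onto SO(V, q)(ℚ)
    (∀ T : ↥Vsub →ₗ[ℚ] ↥Vsub,
      (∀ Y : ↥Vsub, qV ((T Y : Matrix (Fin 4) (Fin 4) ℚ)) = qV (Y : Matrix (Fin 4) (Fin 4) ℚ)) →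
      LinearMap.det T = 1 →
      ∃ g : Matrix (Fin 4) (Fin 4) ℚ, IsGSp4 g ∧
        ∀ Y : ↥Vsub, (T Y : Matrix (Fin 4) (Fin 4) ℚ) = g * (Y : Matrix (Fin 4) (Fin 4) ℚ) * g⁻¹) ∧
    -- Φ(g) = Φ(g′) iff g′ is a nonzero scalar multiple of g
    (∀ g g' : Matrix (Fin 4) (Fin 4) ℚ, IsGSp4 g → IsGSp4 g' →
      ((∀ Y, memV Y → g * Y * g⁻¹ = g' * Y * g'⁻¹) ↔ ∃ lam : ℚ, lam ≠ 0 ∧ g' = lam • g)) := by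
  refine ⟨fun g hg T hT => ?_, fun T hT hdet => ?_, fun g g' hg hg' => ⟨fun h => ?_, ?_⟩⟩
  · obtain ⟨g', hg', hTg'⟩ :=
      exists_isGSp4_apply_eq_det_smul_conj_of_isometry (T := T) fun Y => by rw [hT, qV_conj hg.1]
    exact (eq_one_and_eq_smul_of_conj_eq_smul_conj hg.1 hg'.1 fun Y hY =>
      (hT ⟨Y, hY⟩).symm.trans (hTg' ⟨Y, hY⟩)).1
  · obtain ⟨g, hg, hTg⟩ := exists_isGSp4_apply_eq_det_smul_conj_of_isometry hT
    exact ⟨g, hg, fun Y => by rw [hTg, hdet, one_smul]⟩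
  · exact (eq_one_and_eq_smul_of_conj_eq_smul_conj hg.1 hg'.1 (d := 1) fun Y hY => by
      rw [one_smul, h Y hY]).2
  · rintro ⟨lam, hlam, rfl⟩ Y _
    exact (Matrix.smul_mul_mul_inv_smul hlam hg.1 Y).symm

end
end
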